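/- arXiv:1906.05453 — 4 statements merged into one kernel-verified Lean document; each statement's English description precedes it below -/
import Mathlib

section
/- Let $h : [-M, M] \to \mathbb{R}$ be an odd strictly increasing continuous function with $|h(x)| \le c_1|x|$ for some $c_1 > 0$, and suppose a differentiable function $\rho : [t_0, \infty) \to [-M', M']$ satisfies $\dot{\rho}(t) = -h^{-1}(k_1 \rho(t))$ with $k_1 > 0$ and $k_1 M' \le h(M)$. Then $|\rho(t)| \le |\rho(t_0)| e^{-\frac{k_1}{c_1}(t - t_0)}$ for all $t \ge t_0$; in particular $\rho(t) \to 0$ as $t \to \infty$. -/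
open Real Filter

/-!
Since `h` is odd and increasing, `h 0 = 0` and `y * h⁻¹ y ≥ 0`; together with `|y| ≤ c1 |h⁻¹ y|`
this gives `ρ * h⁻¹ (k1 ρ) ≥ (k1 / c1) ρ²`, i.e. `ρ ρ' ≤ -(k1 / c1) ρ²`. Hence
`u t = ρ t * exp ((k1 / c1) (t - t0))` satisfies `u u' ≤ 0`, so `u²` is nonincreasing and
`|u t| ≤ |u t0| = |ρ t0|`.
-/

theorem abs_le_abs_of_mul_deriv_nonpos {u u' : ℝ → ℝ} {t0 : ℝ}
    (hu : ∀ t ≥ t0, HasDerivAt u (u' t) t) (hneg : ∀ t ≥ t0, u t * u' t ≤ 0) :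
    ∀ t ≥ t0, |u t| ≤ |u t0| := by
  have hsq : ∀ t ≥ t0, HasDerivAt (fun s => u s ^ 2) (2 * (u t * u' t)) t := fun t ht => by
    simpa [mul_assoc] using (hu t ht).fun_pow 2
  have hanti : AntitoneOn (fun s => u s ^ 2) (Set.Ici t0) := by
    refine antitoneOn_of_hasDerivWithinAt_nonpos (f' := fun t => 2 * (u t * u' t)) (convex_Ici t0)
      (fun t ht => (hsq t ht).continuousAt.continuousWithinAt) (fun t ht => ?_) (fun t ht => ?_)
    all_goals rw [interior_Ici] at ht
    · exact (hsq t (le_of_lt ht)).hasDerivWithinAt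
    · linarith [hneg t (le_of_lt ht)]
  intro t ht
  exact sq_le_sq.mp (hanti Set.self_mem_Ici ht ht)

theorem abs_le_mul_exp_of_mul_deriv_le {f f' : ℝ → ℝ} {a t0 : ℝ}
    (hf : ∀ t ≥ t0, HasDerivAt f (f' t) t) (hdecay : ∀ t ≥ t0, f t * f' t ≤ -a * f t ^ 2) :
    ∀ t ≥ t0, |f t| ≤ |f t0| * exp (-a * (t - t0)) := by
  set E : ℝ → ℝ := fun t => exp (a * (t - t0))
  have hE : ∀ t, HasDerivAt E (E t * a) t := fun t => by
    simpa using (((hasDerivAt_id t).sub_const t0).const_mul a).exp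
  have hu : ∀ t ≥ t0, HasDerivAt (fun s => f s * E s) (f' t * E t + f t * (E t * a)) t :=
    fun t ht => (hf t ht).mul (hE t)
  have hneg : ∀ t ≥ t0, f t * E t * (f' t * E t + f t * (E t * a)) ≤ 0 := fun t ht => by
    have : f t * E t * (f' t * E t + f t * (E t * a)) = (f t * f' t + a * f t ^ 2) * E t ^ 2 := by
      ring
    rw [this]
    exact mul_nonpos_of_nonpos_of_nonneg (by linarith [hdecay t ht]) (sq_nonneg _)
  intro t ht
  have hmain := abs_le_abs_of_mul_deriv_nonpos hu hneg t ht
  have hft : f t = f t * E t * exp (-a * (t - t0)) := by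
    rw [mul_assoc, ← exp_add]
    simp
  rw [hft, abs_mul, abs_of_pos (exp_pos _)]
  simpa [E] using mul_le_mul_of_nonneg_right hmain (exp_pos (-a * (t - t0))).le

theorem MonotoneOn.map_mul_nonneg_of_map_zero {h : ℝ → ℝ} {s : Set ℝ} (hmono : MonotoneOn h s)
    (h0 : (0 : ℝ) ∈ s) (hh0 : h 0 = 0) {x : ℝ} (hx : x ∈ s) : 0 ≤ h x * x := by
  rcases le_total x 0 with hx0 | hx0
  · exact mul_nonneg_of_nonpos_of_nonpos (hh0 ▸ hmono hx h0 hx0) hx0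
  · exact mul_nonneg (hh0 ▸ hmono h0 hx hx0) hx0

theorem sq_le_mul_mul_of_abs_le_mul_abs {x y c : ℝ} (hyx : 0 ≤ y * x) (hbound : |y| ≤ c * |x|) :
    y ^ 2 ≤ c * (y * x) := by
  calc y ^ 2 = |y| * |y| := by rw [← sq, sq_abs]
    _ ≤ |y| * (c * |x|) := mul_le_mul_of_nonneg_left hbound (abs_nonneg y)
    _ = c * (y * x) := by rw [← abs_of_nonneg hyx, abs_mul]; ring

theorem tendsto_mul_exp_neg_mul_sub_atTop (b a t0 : ℝ) (ha : 0 < a) :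
    Tendsto (fun t => b * exp (-a * (t - t0))) atTop (nhds 0) := by
  have hlin : Tendsto (fun t => -a * (t - t0)) atTop atBot :=
    (tendsto_atTop_add_const_right _ _ tendsto_id).const_mul_atTop_of_neg (neg_lt_zero.mpr ha)
  simpa using (tendsto_exp_atBot.comp hlin).const_mul b

theorem stmt_7_general (h g ρ : ℝ → ℝ) (M M' c1 k1 t0 : ℝ)
    (hM : 0 < M) (hc1 : 0 < c1) (hk1 : 0 < k1)
    (hodd : ∀ x ∈ Set.Icc (-M) M, h (-x) = -h x)
    (hmono : StrictMonoOn h (Set.Icc (-M) M))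
    (hbound : ∀ x ∈ Set.Icc (-M) M, |h x| ≤ c1 * |x|)
    (hginv : ∀ y : ℝ, |y| ≤ h M → g y ∈ Set.Icc (-M) M ∧ h (g y) = y)
    (hrange : k1 * M' ≤ h M)
    (hρmap : ∀ t ≥ t0, ρ t ∈ Set.Icc (-M') M')
    (hρdiff : ∀ t ≥ t0, DifferentiableAt ℝ ρ t)
    (hρode : ∀ t ≥ t0, deriv ρ t = -g (k1 * ρ t)) :
    (∀ t ≥ t0, |ρ t| ≤ |ρ t0| * Real.exp (-(k1 / c1) * (t - t0))) ∧
      Tendsto ρ atTop (nhds 0) := by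
  have h0 : (0 : ℝ) ∈ Set.Icc (-M) M := ⟨by linarith, hM.le⟩
  have hh0 : h 0 = 0 := by linarith [neg_zero (G := ℝ) ▸ hodd 0 h0]
  have hdecay : ∀ t ≥ t0, ρ t * deriv ρ t ≤ -(k1 / c1) * ρ t ^ 2 := fun t ht => by
    have hy : |k1 * ρ t| ≤ h M := by
      rw [abs_mul, abs_of_pos hk1]
      nlinarith [abs_le.mpr (hρmap t ht)]
    obtain ⟨hgy, hhgy⟩ := hginv _ hy
    have hsign := hmono.monotoneOn.map_mul_nonneg_of_map_zero h0 hh0 hgy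
    have hsq := sq_le_mul_mul_of_abs_le_mul_abs (hhgy ▸ hsign) (hhgy ▸ hbound _ hgy)
    have hk : k1 * ρ t ^ 2 ≤ c1 * (ρ t * g (k1 * ρ t)) :=
      le_of_mul_le_mul_left (by linarith) hk1
    rw [hρode t ht, mul_neg, neg_mul, neg_le_neg_iff, div_mul_eq_mul_div, div_le_iff₀ hc1]
    linarith
  have hexp := abs_le_mul_exp_of_mul_deriv_le (fun t ht => (hρdiff t ht).hasDerivAt) hdecay
  refine ⟨hexp, squeeze_zero_norm' ?_
    (tendsto_mul_exp_neg_mul_sub_atTop |ρ t0| _ t0 (div_pos hk1 hc1))⟩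
  filter_upwards [eventually_ge_atTop t0] with t ht
  exact hexp t ht

theorem stmt_7 (h g ρ : ℝ → ℝ) (M M' c1 k1 t0 : ℝ)
    (hM : 0 < M) (hM' : 0 < M') (hc1 : 0 < c1) (hk1 : 0 < k1)
    (hodd : ∀ x ∈ Set.Icc (-M) M, h (-x) = -h x)
    (hmono : StrictMonoOn h (Set.Icc (-M) M))
    (hcont : ContinuousOn h (Set.Icc (-M) M))
    (hbound : ∀ x ∈ Set.Icc (-M) M, |h x| ≤ c1 * |x|)
    (hginv : ∀ y : ℝ, |y| ≤ h M → g y ∈ Set.Icc (-M) M ∧ h (g y) = y)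
    (hrange : k1 * M' ≤ h M)
    (hρmap : ∀ t ≥ t0, ρ t ∈ Set.Icc (-M') M')
    (hρdiff : ∀ t ≥ t0, DifferentiableAt ℝ ρ t)
    (hρode : ∀ t ≥ t0, deriv ρ t = -g (k1 * ρ t)) :
    (∀ t ≥ t0, |ρ t| ≤ |ρ t0| * Real.exp (-(k1 / c1) * (t - t0))) ∧
      Tendsto ρ atTop (nhds 0) :=
  stmt_7_general h g ρ M M' c1 k1 t0 hM hc1 hk1 hodd hmono hbound hginv hrange hρmap hρdiff hρode
end

section
/- Let $L > 0$ and let $\chi : [0, \infty) \to \mathbb{R}$ be continuous, non-decreasing, and strictly increasing on $[L - \delta_2, L + \delta_2]$ for some $\delta_2 > 0$. Suppose a differentiable function $\zeta : [t_0, \infty) \to [0, \infty)$ satisfies $\dot{\zeta}(t) = \chi(L) - v^r(t)$ where $v^r(t)$ satisfies $(v^r(t) - \chi(L))(\zeta(t) - L) \ge 0$ with equality if and only if $\zeta(t) = L$, and additionally $v^r(t) = \chi(\zeta(t))$. Then $V(t) = \frac{1}{2}(\zeta(t) - L)^2$ satisfies $\dot{V}(t) \le 0$ with $\dot{V}(t)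 = 0$ iff $\zeta(t) = L$, and $\zeta(t) \to L$ as $t \to \infty$. -/
/-!
`V = (ζ - L)² / 2` has derivative `-(χ ζ - χ L)(ζ - L) ≤ 0` by monotonicity of `χ`, so `|ζ - L|` is
non-increasing. If `|ζ - L|` stayed above some `ε > 0`, strict monotonicity of `χ` near `L` would
bound that derivative by a fixed negative constant, and `V` would become negative in finite time.
-/

open Filter Set Topology

section RayCalculus

variable {f f' : ℝ → ℝ} {t0 : ℝ}

theorem sub_le_mul_sub_of_hasDerivAt_le {C : ℝ} (hf : ∀ t ≥ t0, HasDerivAt f (f' t) t)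
    (hle : ∀ t ≥ t0, f' t ≤ C) {x y : ℝ} (hx : t0 ≤ x) (hxy : x ≤ y) :
    f y - f x ≤ C * (y - x) := by
  have hderiv : ∀ t ∈ interior (Ici t0), HasDerivAt f (f' t) t := fun t ht =>
    hf t (interior_subset ht)
  refine (convex_Ici t0).image_sub_le_mul_sub_of_deriv_le
    (fun t ht => (hf t ht).continuousAt.continuousWithinAt)
    (fun t ht => (hderiv t ht).differentiableAt.differentiableWithinAt)
    (fun t ht => (hderiv t ht).deriv ▸ hle t (interior_subset ht)) x hx y (hx.trans hxy) hxy

theorem antitoneOn_Ici_of_hasDerivAt_nonpos (hf : ∀ t ≥ t0, HasDerivAt f (f' t) t)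
    (hle : ∀ t ≥ t0, f' t ≤ 0) : AntitoneOn f (Ici t0) := fun x hx _ _ hxy => by
  linarith [sub_le_mul_sub_of_hasDerivAt_le hf hle hx hxy]

theorem exists_neg_lt_of_hasDerivAt_of_nonneg (hf : ∀ t ≥ t0, HasDerivAt f (f' t) t)
    (hnonneg : ∀ t ≥ t0, 0 ≤ f t) {c : ℝ} (hc : 0 < c) : ∃ t ≥ t0, -c < f' t := by
  by_contra! hle
  set T := t0 + f t0 / c + 1
  have hT : t0 ≤ T := by have := div_nonneg (hnonneg t0 le_rfl) hc.le; linarith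
  have hdecay := sub_le_mul_sub_of_hasDerivAt_le hf hle le_rfl hT
  have hcT : c * (T - t0) = f t0 + c := by simp only [T]; field_simp; ring
  linarith [hnonneg T hT]

end RayCalculus

theorem tendsto_of_antitoneOn_abs_sub {g : ℝ → ℝ} {t0 L : ℝ}
    (hanti : AntitoneOn (fun t => |g t - L|) (Ici t0))
    (hsmall : ∀ ε > 0, ∃ t ≥ t0, |g t - L| < ε) : Tendsto g atTop (𝓝 L) := by
  refine Metric.tendsto_atTop.2 fun ε hε => ?_
  obtain ⟨t1, ht1, hlt⟩ := hsmall ε hε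
  exact ⟨t1, fun t ht => (hanti (mem_Ici.2 ht1) (mem_Ici.2 (ht1.trans ht)) ht).trans_lt hlt⟩

theorem exists_pos_le_mul_sub_of_le_abs_sub {χ : ℝ → ℝ} {L δ ε : ℝ} (hL : 0 ≤ L)
    (hmono : MonotoneOn χ (Ici 0)) (hstrict : StrictMonoOn χ (Icc (L - δ) (L + δ)))
    (hε : 0 < ε) (hεδ : ε ≤ δ) :
    ∃ c > 0, ∀ x ≥ 0, ε ≤ |x - L| → c ≤ (χ x - χ L) * (x - L) := by
  have hmem : ∀ y, L - ε ≤ y → y ≤ L + ε → y ∈ Icc (L - δ) (L + δ) := fun _ h1 h2 =>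
    ⟨by linarith, by linarith⟩
  have hL_mem := hmem L (by linarith) (by linarith)
  have hup : χ L < χ (L + ε) :=
    hstrict hL_mem (hmem _ (by linarith) le_rfl) (by linarith)
  have hdown : χ (L - ε) < χ L :=
    hstrict (hmem _ le_rfl (by linarith)) hL_mem (by linarith)
  refine ⟨ε * min (χ (L + ε) - χ L) (χ L - χ (L - ε)),
    mul_pos hε (lt_min (by linarith) (by linarith)), fun x hx hdist => ?_⟩
  rcases le_abs'.1 hdist with hbelow | habove
  · have hχx : χ x ≤ χ (L - ε) := hmono hx (by simp only [mem_Ici]; linarith) (by linarith)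
    have := min_le_right (χ (L + ε) - χ L) (χ L - χ (L - ε))
    nlinarith
  · have hχx : χ (L + ε) ≤ χ x := hmono (by simp only [mem_Ici]; linarith) hx (by linarith)
    have := min_le_left (χ (L + ε) - χ L) (χ L - χ (L - ε))
    nlinarith

theorem mul_sub_nonneg_of_monotoneOn {χ : ℝ → ℝ} {s : Set ℝ} (hmono : MonotoneOn χ s)
    {x y : ℝ} (hx : x ∈ s) (hy : y ∈ s) : 0 ≤ (χ x - χ y) * (x - y) := by
  rcases le_total x y with hxy | hyx
  · exact mul_nonneg_of_nonpos_of_nonpos (sub_nonpos.2 (hmono hx hy hxy)) (sub_nonpos.2 hxy)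
  · exact mul_nonneg (sub_nonneg.2 (hmono hy hx hyx)) (sub_nonneg.2 hyx)

theorem HasDerivAt.half_sq_sub {ζ : ℝ → ℝ} {ζ' L t : ℝ} (h : HasDerivAt ζ ζ' t) :
    HasDerivAt (fun s => 1 / 2 * (ζ s - L) ^ 2) ((ζ t - L) * ζ') t := by
  refine (((h.sub_const L).pow 2).const_mul (1 / 2 : ℝ)).congr_deriv ?_
  push_cast
  ring

theorem tendsto_of_hasDerivAt_sub_comp {χ ζ : ℝ → ℝ} {L δ t0 : ℝ} (hL : 0 ≤ L) (hδ : 0 < δ)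
    (hmono : MonotoneOn χ (Ici 0)) (hstrict : StrictMonoOn χ (Icc (L - δ) (L + δ)))
    (hζ_nonneg : ∀ t ≥ t0, 0 ≤ ζ t) (hζ : ∀ t ≥ t0, HasDerivAt ζ (χ L - χ (ζ t)) t) :
    Tendsto ζ atTop (𝓝 L) := by
  set V := fun s => 1 / 2 * (ζ s - L) ^ 2
  have hV : ∀ t ≥ t0, HasDerivAt V (-((χ (ζ t) - χ L) * (ζ t - L))) t := fun t ht =>
    (hζ t ht).half_sq_sub.congr_deriv (by ring)
  have hV_anti : AntitoneOn V (Ici t0) := antitoneOn_Ici_of_hasDerivAt_nonpos hV fun t ht =>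
    neg_nonpos.2 (mul_sub_nonneg_of_monotoneOn hmono (hζ_nonneg t ht) (mem_Ici.2 hL))
  refine tendsto_of_antitoneOn_abs_sub (t0 := t0) (fun x hx y hy hxy => ?_) fun ε hε => ?_
  · have hVxy : V y ≤ V x := hV_anti hx hy hxy
    simp only [V] at hVxy
    exact sq_le_sq.1 (by linarith)
  · by_contra! hfar
    obtain ⟨c, hc, hcoercive⟩ := exists_pos_le_mul_sub_of_le_abs_sub hL hmono hstrict
      (lt_min hε hδ) (min_le_right ε δ)
    obtain ⟨t, ht, hlt⟩ := exists_neg_lt_of_hasDerivAt_of_nonneg hV (fun t _ => by positivity) hc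
    linarith [hcoercive (ζ t) (hζ_nonneg t ht) ((min_le_left ε δ).trans (hfar t ht))]

theorem stmt_12_general (L δ2 t0 : ℝ) (χ : ℝ → ℝ) (ζ vr : ℝ → ℝ)
    (hL : 0 < L) (hδ2 : 0 < δ2)
    (hχmono : MonotoneOn χ (Set.Ici 0))
    (hχstrict : StrictMonoOn χ (Set.Icc (L - δ2) (L + δ2)))
    (hζmap : ∀ t ≥ t0, ζ t ∈ Set.Ici (0 : ℝ))
    (hζdiff : ∀ t ≥ t0, DifferentiableAt ℝ ζ t)
    (hζode : ∀ t ≥ t0, deriv ζ t = χ L - vr t)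
    (hsign : ∀ t ≥ t0, (vr t - χ L) * (ζ t - L) ≥ 0)
    (heq : ∀ t ≥ t0, (vr t - χ L) * (ζ t - L) = 0 ↔ ζ t = L)
    (hvr : ∀ t ≥ t0, vr t = χ (ζ t)) :
    (∀ t ≥ t0, deriv (fun s => (1 / 2) * (ζ s - L) ^ 2) t ≤ 0 ∧
      (deriv (fun s => (1 / 2) * (ζ s - L) ^ 2) t = 0 ↔ ζ t = L)) ∧
    Tendsto ζ atTop (nhds L) := by
  refine ⟨fun t ht => ?_, tendsto_of_hasDerivAt_sub_comp hL.le hδ2 hχmono hχstrict hζmap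
    fun t ht => ?_⟩
  · rw [(hζdiff t ht).hasDerivAt.half_sq_sub.deriv, hζode t ht,
      show (ζ t - L) * (χ L - vr t) = -((vr t - χ L) * (ζ t - L)) by ring,
      neg_nonpos, neg_eq_zero]
    exact ⟨hsign t ht, heq t ht⟩
  · simpa only [hζode t ht, hvr t ht] using (hζdiff t ht).hasDerivAt

theorem stmt_12 (L δ2 t0 : ℝ) (χ : ℝ → ℝ) (ζ vr : ℝ → ℝ)
    (hL : 0 < L) (hδ2 : 0 < δ2)
    (hχcont : ContinuousOn χ (Set.Ici 0))
    (hχmono : MonotoneOn χ (Set.Ici 0))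
    (hχstrict : StrictMonoOn χ (Set.Icc (L - δ2) (L + δ2)))
    (hζmap : ∀ t ≥ t0, ζ t ∈ Set.Ici (0 : ℝ))
    (hζdiff : ∀ t ≥ t0, DifferentiableAt ℝ ζ t)
    (hζode : ∀ t ≥ t0, deriv ζ t = χ L - vr t)
    (hsign : ∀ t ≥ t0, (vr t - χ L) * (ζ t - L) ≥ 0)
    (heq : ∀ t ≥ t0, (vr t - χ L) * (ζ t - L) = 0 ↔ ζ t = L)
    (hvr : ∀ t ≥ t0, vr t = χ (ζ t)) :
    (∀ t ≥ t0, deriv (fun s => (1 / 2) * (ζ s - L) ^ 2) t ≤ 0 ∧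
      (deriv (fun s => (1 / 2) * (ζ s - L) ^ 2) t = 0 ↔ ζ t = L)) ∧
    Tendsto ζ atTop (nhds L) :=
  stmt_12_general L δ2 t0 χ ζ vr hL hδ2 hχmono hχstrict hζmap hζdiff hζode hsign heq hvr
end

section
/- Let $\zeta : [t_0, \infty) \to \mathbb{R}$ be differentiable with $\zeta(t_0) > 0$, and suppose $\dot{\zeta}(t) \ge 0$ whenever $0 < \zeta(t) \le L - \delta_1$ (with $0 < \delta_1 < L$). Then $\zeta(t) > 0$ for all $t \ge t_0$. -/
open Set

/- Compare `-f` with the slowly rising line `B y = ε (y - a) - m`, where `ε` is so small that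
`B < 0` on `[a, x]`: wherever `-f` touches `B`, `f` lies in `(0, m]`, so `-f' ≤ 0 < ε = B'`. -/
theorem pos_of_deriv_nonneg_below {f : ℝ → ℝ} {a x m : ℝ} (hm : 0 < m) (hax : a ≤ x)
    (hf : ∀ t ∈ Icc a x, DifferentiableAt ℝ f t) (ha : m ≤ f a)
    (hderiv : ∀ t ∈ Ico a x, 0 < f t → f t ≤ m → 0 ≤ deriv f t) : 0 < f x := by
  set ε := m / (2 * (x - a + 1)) with hε_def
  have hε : 0 < ε := by positivity
  have hεx : ε * (x - a) ≤ m / 2 := by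
    rw [hε_def, div_mul_eq_mul_div, div_le_div_iff₀ (by positivity) two_pos]
    nlinarith
  have hcomp : -f x ≤ ε * (x - a) - m := by
    refine image_le_of_deriv_right_lt_deriv_boundary' (f := fun t ↦ -f t)
      (f' := fun t ↦ -deriv f t) (B := fun y ↦ ε * (y - a) - m) (B' := fun _ ↦ ε)
      ?_ ?_ (by linarith) (by fun_prop) ?_ ?_ ⟨hax, le_rfl⟩
    · exact fun t ht ↦ (hf t ht).continuousAt.neg.continuousWithinAt
    · exact fun t ht ↦ (hf t (Ico_subset_Icc_self ht)).hasDerivAt.neg.hasDerivWithinAt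
    · intro t _
      simpa using ((hasDerivAt_id t).sub_const a).const_mul ε |>.sub_const m |>.hasDerivWithinAt
    · intro t ht htouch
      have hεt_le : ε * (t - a) ≤ ε * (x - a) := by gcongr; exact ht.2.le
      have hεt_nonneg : 0 ≤ ε * (t - a) := mul_nonneg hε.le (sub_nonneg.2 ht.1)
      have := hderiv t ht (by linarith) (by linarith)
      linarith
  linarith

theorem stmt_15_general (ζ : ℝ → ℝ) (t0 L δ1 : ℝ)
    (hδ1L : δ1 < L)
    (hdiff : ∀ t ≥ t0, DifferentiableAt ℝ ζ t)
    (hinit : ζ t0 > 0)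
    (hderiv : ∀ t ≥ t0, 0 < ζ t → ζ t ≤ L - δ1 → deriv ζ t ≥ 0) :
    ∀ t ≥ t0, ζ t > 0 := by
  intro t ht
  exact pos_of_deriv_nonneg_below (m := min (ζ t0) (L - δ1)) (lt_min hinit (by linarith)) ht
    (fun s hs ↦ hdiff s hs.1) (min_le_left _ _)
    (fun s hs hpos hle ↦ hderiv s hs.1 hpos (hle.trans (min_le_right _ _)))

theorem stmt_15 (ζ : ℝ → ℝ) (t0 L δ1 : ℝ)
    (hδ1 : 0 < δ1) (hδ1L : δ1 < L)
    (hdiff : ∀ t ≥ t0, DifferentiableAt ℝ ζ t)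
    (hinit : ζ t0 > 0)
    (hderiv : ∀ t ≥ t0, 0 < ζ t → ζ t ≤ L - δ1 → deriv ζ t ≥ 0) :
    ∀ t ≥ t0, ζ t > 0 :=
  stmt_15_general ζ t0 L δ1 hδ1L hdiff hinit hderiv
end

section
/- Let $\psi : [t_0, \infty) \to [-a, a]$ (with $a > 0$) be differentiable, and suppose there exists $\alpha > 0$ such that at every time $t$, either $\vartheta(t) > 0$ and $\dot{\psi}(t) \le -\alpha$, or $\vartheta(t) < 0$ and $\dot{\psi}(t) \ge \alpha$, or $\vartheta(t) = 0$, where $\vartheta$ is continuous. If $\vartheta(t_0) \ne 0$ and $\vartheta$ changes sign only by passing through zero, then there exists $t^* \le t_0 + \frac{2a}{\alpha}$ with $\vartheta(t^*) = 0$. -/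
/-!
If `ϑ` never vanished on `[t0, t0 + 2a/α]`, by continuity it would keep one sign there, so `ψ`
would move monotonically at speed at least `α` for time `2a/α`, i.e. across the whole of
`[-a, a]`. It would then sit at an endpoint of `[-a, a]` while still moving outwards, which is
impossible for a function confined to `[-a, a]`.
-/

open Set

theorem IsPreconnected.forall_gt_or_forall_lt {α β : Type*} [TopologicalSpace α]
    [TopologicalSpace β] [LinearOrder β] [OrderClosedTopology β] {s : Set α} {f : α → β} {c : β}
    (hs : IsPreconnected s) (hf : ContinuousOn f s) (hne : ∀ x ∈ s, f x ≠ c) :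
    (∀ x ∈ s, c < f x) ∨ ∀ x ∈ s, f x < c := by
  by_contra! h
  obtain ⟨⟨x, hx, hxc⟩, y, hy, hyc⟩ := h
  obtain ⟨z, hz, hzc⟩ := hs.intermediate_value hx hy hf ⟨hxc, hyc⟩
  exact hne z hz hzc

theorem IsMinOn.deriv_nonneg_of_Ici {f : ℝ → ℝ} {a : ℝ} (hmin : IsMinOn f (Ici a) a)
    (hf : DifferentiableAt ℝ f a) : 0 ≤ deriv f a := by
  have hcone : (1 : ℝ) ∈ posTangentConeAt (Ici a) a :=
    mem_posTangentConeAt_of_segment_subset (by simp [segment_eq_Icc, Icc_subset_Ici_self])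
  simpa using hmin.localize.hasFDerivWithinAt_nonneg hf.hasFDerivAt.hasFDerivWithinAt hcone

theorem exists_mem_Icc_neg_lt_deriv {f : ℝ → ℝ} {t₀ m M α : ℝ} (hα : 0 < α)
    (hf : ∀ t ≥ t₀, DifferentiableAt ℝ f t) (hmem : ∀ t ≥ t₀, f t ∈ Icc m M) :
    ∃ t ∈ Icc t₀ (t₀ + (M - m) / α), -α < deriv f t := by
  set T := t₀ + (M - m) / α
  have hmM : m ≤ M := (hmem t₀ le_rfl).1.trans (hmem t₀ le_rfl).2
  have hT : t₀ ≤ T := le_add_of_nonneg_right (div_nonneg (sub_nonneg.2 hmM) hα.le)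
  by_contra! hderiv
  have hdrop : f T - f t₀ ≤ -α * (T - t₀) :=
    (convex_Icc t₀ T).image_sub_le_mul_sub_of_deriv_le
      (fun t ht => (hf t ht.1).continuousAt.continuousWithinAt)
      (fun t ht => (hf t (interior_subset ht).1).differentiableWithinAt)
      (fun t ht => hderiv t (interior_subset ht)) t₀ (left_mem_Icc.2 hT) T (right_mem_Icc.2 hT) hT
  have hfT : f T ≤ m := by
    have : α * (T - t₀) = M - m := by simp only [T]; field_simp; ring
    linarith [(hmem t₀ le_rfl).2]
  have hmin : IsMinOn f (Ici T) T := fun t ht => hfT.trans (hmem t (hT.trans ht)).1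
  linarith [hmin.deriv_nonneg_of_Ici (hf T hT), hderiv T (right_mem_Icc.2 hT)]

theorem exists_mem_Icc_deriv_lt {f : ℝ → ℝ} {t₀ m M α : ℝ} (hα : 0 < α)
    (hf : ∀ t ≥ t₀, DifferentiableAt ℝ f t) (hmem : ∀ t ≥ t₀, f t ∈ Icc m M) :
    ∃ t ∈ Icc t₀ (t₀ + (M - m) / α), deriv f t < α := by
  obtain ⟨t, ht, hlt⟩ := exists_mem_Icc_neg_lt_deriv (f := -f) (m := -M) (M := -m) hα
    (fun t ht => (hf t ht).neg) (fun t ht => by simpa [and_comm] using hmem t ht)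
  refine ⟨t, by rwa [neg_sub_neg] at ht, ?_⟩
  rw [deriv.neg'] at hlt
  linarith

theorem stmt_18_general (ψ ϑ : ℝ → ℝ) (t0 a α : ℝ)
    (hα : 0 < α)
    (hmap : ∀ t ≥ t0, ψ t ∈ Set.Icc (-a) a)
    (hdiff : ∀ t ≥ t0, DifferentiableAt ℝ ψ t)
    (hϑcont : Continuous ϑ)
    (hdyn : ∀ t ≥ t0, (ϑ t > 0 ∧ deriv ψ t ≤ -α) ∨ (ϑ t < 0 ∧ deriv ψ t ≥ α) ∨ ϑ t = 0) :
    ∃ tstar, t0 ≤ tstar ∧ tstar ≤ t0 + 2 * a / α ∧ ϑ tstar = 0 := by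
  by_contra! hne
  rw [show 2 * a = a - -a by ring] at hne
  rcases isPreconnected_Icc.forall_gt_or_forall_lt hϑcont.continuousOn
      (fun t ht => hne t ht.1 ht.2) with hpos | hneg
  · obtain ⟨t, ht, hlt⟩ := exists_mem_Icc_neg_lt_deriv hα hdiff hmap
    rcases hdyn t ht.1 with ⟨-, h⟩ | ⟨h, -⟩ | h
    · linarith
    · linarith [hpos t ht]
    · exact hne t ht.1 ht.2 h
  · obtain ⟨t, ht, hlt⟩ := exists_mem_Icc_deriv_lt hα hdiff hmap
    rcases hdyn t ht.1 with ⟨h, -⟩ | ⟨-, h⟩ | h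
    · linarith [hneg t ht]
    · linarith
    · exact hne t ht.1 ht.2 h

theorem stmt_18 (ψ ϑ : ℝ → ℝ) (t0 a α : ℝ)
    (ha : 0 < a) (hα : 0 < α)
    (hmap : ∀ t ≥ t0, ψ t ∈ Set.Icc (-a) a)
    (hdiff : ∀ t ≥ t0, DifferentiableAt ℝ ψ t)
    (hϑcont : Continuous ϑ)
    (hdyn : ∀ t ≥ t0, (ϑ t > 0 ∧ deriv ψ t ≤ -α) ∨ (ϑ t < 0 ∧ deriv ψ t ≥ α) ∨ ϑ t = 0)
    (hinit : ϑ t0 ≠ 0) :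
    ∃ tstar, t0 ≤ tstar ∧ tstar ≤ t0 + 2 * a / α ∧ ϑ tstar = 0 :=
  stmt_18_general ψ ϑ t0 a α hα hmap hdiff hϑcont hdyn
end
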